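/- Let μ, n, r, d be positive integers with r ≤ n and n−r ≤ d ≤ n−1, set b = d+1−(n−r), N = rn, and let q = 2^w satisfy q ≥ max{rnμ, bn}. Let β ∈ GF(q) have multiplicative order O(β) ≥ max{rnμ, bn} and set β_{i,j} = β^{(i−1)+(j−1)n} for 1 ≤ i ≤ n, 1 ≤ j ≤ b. Then for every a ∈ {0, 1, …, b^n − 1} with base-b digits a_1,…,a_n, the matrix H^{(a)} of Construction 1 satisfies the (r, s=2) sector-disk criterion: for every subset T ⊆ {1,…,n} with |T| = r, setting E_i = {(i−1)n + t : t ∈ T}, and for every 2-element set F ⊆ {1, …, μn} \ (∪_i E_i), the (rμ+2) × (rμ+2) submatrix of H^{(a)} formed by the columns indexed by (∪_i E_i) ∪ F is invertible. -/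

import Mathlib

/-- The parity-check matrix `H^(a)` of Construction 1 (locally `d`-MSR PMDS/SD array
codes), of size `(rμ+2) × (μn)` over a field `F`, for the row index `a` with base-`b`
digits `a_t = (a / b^t) % b` (0-indexed `t`).  With `β_{t, a_t+1} = β^(t + a_t · n)`,
rows `0, …, rμ-1` form the `μ` diagonal Vandermonde blocks `H₀^(a)` with entries
`β_{t,a_t+1}^u` (block `i = v / r`, row-within-block `u = v % r`); row `rμ` has entries
`β_{t,a_t+1}^r`; row `rμ+1` has entries `β^(-jN) · β_{t,a_t+1}⁻¹`, where `j = c / n`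
is the (0-indexed) local group of column `c`. -/
noncomputable def construction1H (μ n r N b : ℕ) {F : Type*} [Field F]
    (β : Fˣ) (a : ℕ) :
    Matrix (Fin (r * μ + 2)) (Fin (μ * n)) F :=
  fun v c =>
    if (v : ℕ) < r * μ then
      if (c : ℕ) / n = (v : ℕ) / r then
        (((β ^ ((c : ℕ) % n + a / b ^ ((c : ℕ) % n) % b * n)) ^ ((v : ℕ) % r) : Fˣ) : F)
      else 0
    else if (v : ℕ) = r * μ then
      (((β ^ ((c : ℕ) % n + a / b ^ ((c : ℕ) % n) % b * n)) ^ r : Fˣ) : F)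
    else
      ((β ^ (-(((c : ℕ) / n : ℤ) * (N : ℤ))) *
        (β ^ ((c : ℕ) % n + a / b ^ ((c : ℕ) % n) % b * n))⁻¹ : Fˣ) : F)

/-- The `(r, s)` sector-disk criterion for a matrix with `rμ + s` rows and `μn` columns,
columns partitioned into `μ` local groups of `n` consecutive columns: for every set
`T ⊆ {1,…,n}` of `r` within-group positions (used as the erased positions `E_i` in *every*
local group) and every `s`-element set `Fs` of further columns avoiding those positions,
the square submatrix on the columns `(∪ᵢ E_i) ∪ Fs` is invertible. -/
def sdCriterion {F : Type*} [Field F] (μ n r s : ℕ) (hn : 0 < n)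
    (H : Matrix (Fin (r * μ + s)) (Fin (μ * n)) F) : Prop :=
  ∀ T : Finset (Fin n),
    T.card = r →
    ∀ Fs : Finset (Fin (μ * n)),
      Fs.card = s →
      (∀ c ∈ Fs, (⟨(c : ℕ) % n, Nat.mod_lt _ hn⟩ : Fin n) ∉ T) →
      ∀ e : Fin (r * μ + s) → Fin (μ * n),
        Function.Injective e →
        (Set.range e =
          {c : Fin (μ * n) | (⟨(c : ℕ) % n, Nat.mod_lt _ hn⟩ : Fin n) ∈ T} ∪ ↑Fs) →
        IsUnit (H.submatrix id e).det

/-! A kernel vector `c` of the square submatrix, extended by zero to all columns, has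
vanishing moments `∑ x_k ^ i c_k` (`i < r`) inside every local group (the Vandermonde blocks),
and vanishing global sums `∑ x_k ^ r c_k` and `∑ β^(-jN) x_k⁻¹ c_k` (the two global rows).
Let `π = ∏_{t ∈ T} (X - x_t)`. The local moments kill every polynomial of degree `< r`, so
`∑ π(x_k) c_k = 0` and, since `π(z) / z = π(0) / z + (divX π)(z)`, also
`∑ β^(-jN) x_k⁻¹ π(x_k) c_k = 0`. As `π` vanishes on the erased sector, only the two extra
columns `f₁, f₂` survive in these sums; their coefficients `β^(-jN) x⁻¹` are distinct powers
of `β` below its order, so the `2 × 2` system forces `c_{f₁} = c_{f₂} = 0`. Each local group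
is then supported on `r` distinct points, where its Vandermonde block is invertible. -/
open Polynomial Finset Lagrange
open scoped Matrix

section MomentDecoding

variable {ι F : Type*} [Field F] {x c : ι → F} {r : ℕ}

theorem sum_eval_mul_eq_zero_of_moments {s : Finset ι}
    (hmom : ∀ i < r, ∑ k ∈ s, x k ^ i * c k = 0) {P : F[X]} (hP : P.degree < r) :
    ∑ k ∈ s, P.eval (x k) * c k = 0 := by
  rcases eq_or_ne P 0 with rfl | hP0
  · simp
  simp_rw [eval_eq_sum_range' ((natDegree_lt_iff_degree_lt hP0).2 hP), sum_mul, mul_assoc]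
  rw [sum_comm]
  exact sum_eq_zero fun i hi => by rw [← mul_sum, hmom i (mem_range.1 hi), mul_zero]

theorem sum_weight_mul_eval_mul_eq_zero_of_moments [Fintype ι] {G : Type*} [DecidableEq G]
    {grp : ι → G} (hmom : ∀ j, ∀ i < r, ∑ k with grp k = j, x k ^ i * c k = 0)
    (wt : G → F) {P : F[X]} (hP : P.degree < r) :
    ∑ k, wt (grp k) * (P.eval (x k) * c k) = 0 := by
  rw [← sum_fiberwise_of_maps_to fun k _ => mem_image_of_mem grp (mem_univ k)]
  refine sum_eq_zero fun j _ => ?_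
  rw [sum_congr rfl fun k hk => by rw [(mem_filter.1 hk).2], ← mul_sum,
    sum_eval_mul_eq_zero_of_moments (hmom j) hP, mul_zero]

theorem eq_zero_of_moments_of_card_le {s : Finset ι}
    (hmom : ∀ i < r, ∑ k ∈ s, x k ^ i * c k = 0) (hinj : Set.InjOn x s)
    {S : Finset F} (hS : #S ≤ r) (hsupp : ∀ k ∈ s, c k ≠ 0 → x k ∈ S) {k : ι} (hk : k ∈ s) :
    c k = 0 := by
  classical
  by_contra hck
  have hxk := hsupp k hk hck
  have hdeg : (nodal (S.erase (x k)) id).degree < r := by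
    rw [degree_nodal]
    exact_mod_cast (card_erase_lt_of_mem hxk).trans_le hS
  have hsum := sum_eval_mul_eq_zero_of_moments hmom hdeg
  rw [sum_eq_single_of_mem k hk fun k' hk' hne => ?_] at hsum
  · refine hck ((mul_eq_zero.1 hsum).resolve_left (eval_nodal_not_at_node fun y hy h => ?_))
    exact ne_of_mem_erase hy h.symm
  · by_cases hck' : c k' = 0
    · rw [hck', mul_zero]
    · have hk'S : x k' ∈ S.erase (x k) :=
        mem_erase.2 ⟨fun h => hne (hinj hk' hk h), hsupp k' hk' hck'⟩
      exact mul_eq_zero_of_left (eval_nodal_at_node (v := id) hk'S) _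

theorem eq_zero_pair_of_moments [Fintype ι] {G : Type*} [DecidableEq G] {grp : ι → G}
    (hmom : ∀ j, ∀ i < r, ∑ k with grp k = j, x k ^ i * c k = 0)
    (htop : ∑ k, x k ^ r * c k = 0) {wt : G → F}
    (hinv : ∑ k, wt (grp k) * (x k)⁻¹ * c k = 0) (hx : ∀ k, x k ≠ 0)
    {S : Finset F} (hS : #S = r) {f₁ f₂ : ι} (hf : f₁ ≠ f₂) (hf₁ : x f₁ ∉ S) (hf₂ : x f₂ ∉ S)
    (hγ : wt (grp f₁) * (x f₁)⁻¹ ≠ wt (grp f₂) * (x f₂)⁻¹)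
    (hsupp : ∀ k, c k ≠ 0 → x k ∈ S ∨ k = f₁ ∨ k = f₂) : c f₁ = 0 ∧ c f₂ = 0 := by
  classical
  set π : F[X] := nodal S id
  have hπ0 : π ≠ 0 := nodal_ne_zero
  have hπdeg : π.degree = r := by rw [degree_nodal, hS]
  have hπ : ∀ {k}, x k ∉ S → π.eval (x k) ≠ 0 := fun hk =>
    eval_nodal_not_at_node fun y hy h => hk (h ▸ hy)
  set u : ι → F := fun k => π.eval (x k) * c k
  have hu : ∀ k, k ≠ f₁ → k ≠ f₂ → u k = 0 := by
    intro k hk₁ hk₂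
    by_cases hck : c k = 0
    · simp [u, hck]
    obtain h | h | h := hsupp k hck
    · exact mul_eq_zero_of_left (eval_nodal_at_node (v := id) h) _
    · exact absurd h hk₁
    · exact absurd h hk₂
  have hsum : ∀ g : ι → F, ∑ k, g k * u k = g f₁ * u f₁ + g f₂ * u f₂ := by
    intro g
    rw [← sum_pair hf (f := fun k => g k * u k)]
    refine (sum_subset (subset_univ _) fun k _ hk => ?_).symm
    simp only [mem_insert, mem_singleton, not_or] at hk
    rw [hu k hk.1 hk.2, mul_zero]
  -- the local moments kill `π - X ^ r`, and the row of `r`-th powers does the rest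
  have hA : ∑ k, 1 * u k = 0 := by
    have hlow : (π - X ^ r).degree < (r : WithBot ℕ) := by
      simpa [hπdeg] using degree_sub_lt_left (by rw [hπdeg, degree_X_pow]) hπ0
        (by rw [nodal_monic.leadingCoeff, leadingCoeff_X_pow])
    calc ∑ k, 1 * u k
        = ∑ k, 1 * ((π - X ^ r).eval (x k) * c k) + ∑ k, x k ^ r * c k := by
          rw [← sum_add_distrib]; simp only [u, eval_sub, eval_pow, eval_X]; ring_nf
      _ = 0 := by
          rw [htop, add_zero]
          exact sum_weight_mul_eval_mul_eq_zero_of_moments hmom (fun _ => 1) hlow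
  -- `π(z) / z = π(0) / z + (divX π)(z)`, and `divX π` has degree `< r`
  have hB : ∑ k, wt (grp k) * (x k)⁻¹ * u k = 0 := by
    have hdivX : (divX π).degree < (r : WithBot ℕ) := hπdeg ▸ degree_divX_lt hπ0
    calc ∑ k, wt (grp k) * (x k)⁻¹ * u k
        = π.coeff 0 * ∑ k, wt (grp k) * (x k)⁻¹ * c k
          + ∑ k, wt (grp k) * ((divX π).eval (x k) * c k) := by
          rw [mul_sum, ← sum_add_distrib]
          refine sum_congr rfl fun k _ => ?_
          have hev := congrArg (eval (x k)) (X_mul_divX_add π)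
          simp only [eval_add, eval_mul, eval_X, eval_C] at hev
          simp only [u, ← hev]
          field_simp [hx k]
          ring
      _ = 0 := by rw [hinv, sum_weight_mul_eval_mul_eq_zero_of_moments hmom _ hdivX]; ring
  rw [hsum] at hA hB
  have hu₁ : u f₁ = 0 := by
    have h : (wt (grp f₁) * (x f₁)⁻¹ - wt (grp f₂) * (x f₂)⁻¹) * u f₁ = 0 := by
      linear_combination hB - wt (grp f₂) * (x f₂)⁻¹ * hA
    exact (mul_eq_zero.1 h).resolve_left (sub_ne_zero.2 hγ)
  have hu₂ : u f₂ = 0 := by linear_combination hA - hu₁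
  exact ⟨(mul_eq_zero.1 hu₁).resolve_left (hπ hf₁), (mul_eq_zero.1 hu₂).resolve_left (hπ hf₂)⟩

theorem eq_zero_of_moments [Fintype ι] {G : Type*} [DecidableEq G] {grp : ι → G}
    (hmom : ∀ j, ∀ i < r, ∑ k with grp k = j, x k ^ i * c k = 0)
    (htop : ∑ k, x k ^ r * c k = 0) {wt : G → F}
    (hinv : ∑ k, wt (grp k) * (x k)⁻¹ * c k = 0) (hx : ∀ k, x k ≠ 0)
    (hinj : ∀ k k', grp k = grp k' → x k = x k' → k = k')
    {S : Finset F} (hS : #S = r) {f₁ f₂ : ι} (hf : f₁ ≠ f₂) (hf₁ : x f₁ ∉ S) (hf₂ : x f₂ ∉ S)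
    (hγ : wt (grp f₁) * (x f₁)⁻¹ ≠ wt (grp f₂) * (x f₂)⁻¹)
    (hsupp : ∀ k, c k ≠ 0 → x k ∈ S ∨ k = f₁ ∨ k = f₂) : c = 0 := by
  obtain ⟨hc₁, hc₂⟩ := eq_zero_pair_of_moments hmom htop hinv hx hS hf hf₁ hf₂ hγ hsupp
  funext k
  refine eq_zero_of_moments_of_card_le (hmom (grp k)) ?_ hS.le ?_
    (mem_filter.2 ⟨mem_univ k, rfl⟩)
  · intro k₁ hk₁ k₂ hk₂
    exact hinj k₁ k₂ ((mem_filter.1 hk₁).2.trans (mem_filter.1 hk₂).2.symm)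
  · intro k' _ hck'
    rcases hsupp k' hck' with h | rfl | rfl
    · exact h
    · exact absurd hc₁ hck'
    · exact absurd hc₂ hck'

end MomentDecoding

theorem Matrix.mulVec_extend_zero {m ι κ R : Type*} [Fintype ι] [Fintype κ]
    [NonUnitalNonAssocSemiring R] (M : Matrix m ι R) {e : κ → ι} (he : e.Injective)
    (v : κ → R) : M *ᵥ Function.extend e v 0 = M.submatrix id e *ᵥ v := by
  ext i
  refine (Fintype.sum_of_injective e he _ _ (fun k hk => ?_) fun k => ?_).symm
  · simp [Function.extend_apply' _ _ _ fun ⟨j, hj⟩ => hk ⟨j, hj⟩]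
  · simp [he.extend_apply]

theorem Matrix.isUnit_det_submatrix_of_forall_mulVec_eq_zero {ι κ K : Type*} [Fintype ι] [Fintype κ]
    [DecidableEq κ] [Field K] (M : Matrix κ ι K) {e : κ → ι} (he : e.Injective)
    (h : ∀ c : ι → K, M *ᵥ c = 0 → (∀ i, c i ≠ 0 → i ∈ Set.range e) → c = 0) :
    IsUnit (M.submatrix id e).det := by
  rw [isUnit_iff_ne_zero]
  intro hdet
  obtain ⟨v, hv, hMv⟩ := Matrix.exists_mulVec_eq_zero_iff.mpr hdet
  have hc := h _ ((M.mulVec_extend_zero he v).trans hMv) fun i hi => by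
    by_contra hie
    exact hi (Function.extend_apply' _ _ _ fun ⟨k, hk⟩ => hie ⟨k, hk⟩)
  exact hv (funext fun k => by simpa [he.extend_apply] using congrFun hc (e k))

section Construction1

variable {F : Type*} [Field F] {μ n r N b : ℕ} {β : Fˣ} {a : ℕ}

def pointExponent (n b a t : ℕ) : ℕ := t + a / b ^ t % b * n

theorem pointExponent_mod (a : ℕ) {t : ℕ} (ht : t < n) : pointExponent n b a t % n = t := by
  rw [pointExponent, Nat.add_mul_mod_self_right, Nat.mod_eq_of_lt ht]

theorem pointExponent_lt (hb : 0 < b) (a : ℕ) {t : ℕ} (ht : t < n) :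
    pointExponent n b a t < b * n := by
  have := Nat.mod_lt (a / b ^ t) hb
  unfold pointExponent
  nlinarith

theorem pow_pointExponent_injOn (hb : 0 < b) (hβ : b * n ≤ orderOf β) (a : ℕ) :
    Set.InjOn (fun t => β ^ pointExponent n b a t) (Set.Iio n) := by
  intro t ht t' ht' h
  have h' := pow_injOn_Iio_orderOf ((pointExponent_lt hb a ht).trans_le hβ)
    ((pointExponent_lt hb a ht').trans_le hβ) h
  rw [← pointExponent_mod a ht, h', pointExponent_mod a ht']

def columnExponent (n r b a k : ℕ) : ℕ := k / n * (r * n) + pointExponent n b a (k % n)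

theorem columnExponent_lt (hb : 0 < b) (hbr : b ≤ r) (a : ℕ) {k : ℕ}
    (hk : k < μ * n) : columnExponent n r b a k < r * n * μ := by
  have hn : 0 < n := Nat.pos_of_mul_pos_left (Nat.zero_lt_of_lt hk)
  have hkn : k / n < μ := Nat.div_lt_of_lt_mul (by rwa [mul_comm])
  have hpe : pointExponent n b a (k % n) < r * n :=
    (pointExponent_lt hb a (Nat.mod_lt k hn)).trans_le (Nat.mul_le_mul_right n hbr)
  calc columnExponent n r b a k < (k / n + 1) * (r * n) := by unfold columnExponent; linarith
    _ ≤ μ * (r * n) := Nat.mul_le_mul_right _ hkn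
    _ = r * n * μ := mul_comm _ _

theorem columnExponent_injective (hr : 0 < r) (hn : 0 < n) (a : ℕ) :
    Function.Injective (columnExponent n r b a) := by
  intro k k' h
  have hmod : ∀ k, columnExponent n r b a k % n = k % n := fun k => by
    rw [columnExponent, ← mul_assoc, add_comm, Nat.add_mul_mod_self_right,
      pointExponent_mod a (Nat.mod_lt k hn)]
  have hkmod : k % n = k' % n := by rw [← hmod, h, hmod]
  have hkdiv : k / n = k' / n := by
    unfold columnExponent at h
    rw [hkmod] at h
    exact Nat.eq_of_mul_eq_mul_right (by positivity) (Nat.add_right_cancel h)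
  rw [← Nat.div_add_mod k n, ← Nat.div_add_mod k' n, hkdiv, hkmod]

-- `columnPoint n b β a k` is the paper's `β_{t, a_t+1}` for `t = k % n`, and
-- `groupWeight N β j` is `β^(-jN)`.
def columnPoint (n b : ℕ) (β : Fˣ) (a k : ℕ) : F :=
  ((β ^ pointExponent n b a (k % n) : Fˣ) : F)

def groupWeight (N : ℕ) (β : Fˣ) (j : ℕ) : F := ((β ^ (-((j : ℤ) * N)) : Fˣ) : F)

theorem construction1H_moments {c : Fin (μ * n) → F}
    (h : construction1H μ n r N b β a *ᵥ c = 0) :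
    (∀ j, ∀ i < r,
      ∑ k : Fin (μ * n) with k.val / n = j, columnPoint n b β a k ^ i * c k = 0) ∧
    ∑ k : Fin (μ * n), columnPoint n b β a k ^ r * c k = 0 ∧
    ∑ k : Fin (μ * n), groupWeight N β (k / n) * (columnPoint n b β a k)⁻¹ * c k = 0 := by
  have hrow : ∀ v, ∑ k, construction1H μ n r N b β a v k * c k = 0 := fun v => by
    simpa [Matrix.mulVec, dotProduct] using congrFun h v
  refine ⟨fun j i hi => ?_, ?_, ?_⟩
  · by_cases hj : j < μ
    · have hv : j * r + i < r * μ := by nlinarith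
      rw [sum_filter]
      refine Eq.trans (sum_congr rfl fun k _ => ?_) (hrow ⟨j * r + i, by omega⟩)
      have hdiv : (j * r + i) / r = j := by
        rw [add_comm, Nat.add_mul_div_right _ _ (by omega), Nat.div_eq_of_lt hi, zero_add]
      have hmod : (j * r + i) % r = i := by
        rw [add_comm, Nat.add_mul_mod_self_right, Nat.mod_eq_of_lt hi]
      simp [construction1H, hv, hdiv, hmod, columnPoint, pointExponent, ite_mul]
    · refine sum_eq_zero fun k hk => absurd ?_ hj
      rw [← (mem_filter.1 hk).2]
      exact Nat.div_lt_of_lt_mul (k.isLt.trans_eq (mul_comm μ n))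
  · refine Eq.trans ?_ (hrow ⟨r * μ, by omega⟩)
    simp [construction1H, columnPoint, pointExponent]
  · refine Eq.trans ?_ (hrow ⟨r * μ + 1, by omega⟩)
    simp [construction1H, columnPoint, groupWeight, pointExponent]

theorem columnPoint_eq_columnPoint_iff (hb : 0 < b) (hβ : b * n ≤ orderOf β) (hn : 0 < n)
    {k k' : ℕ} : (columnPoint n b β a k : F) = columnPoint n b β a k' ↔ k % n = k' % n := by
  refine ⟨fun h => pow_pointExponent_injOn hb hβ a (Nat.mod_lt k hn) (Nat.mod_lt k' hn)
    (Units.ext h), fun h => by rw [columnPoint, h, columnPoint]⟩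

theorem groupWeight_mul_columnPoint_inv (k : ℕ) :
    (groupWeight (r * n) β (k / n) * (columnPoint n b β a k)⁻¹ : F) =
      ((β ^ (-(columnExponent n r b a k : ℤ)) : Fˣ) : F) := by
  rw [groupWeight, columnPoint, ← Units.val_inv_eq_inv_val, ← Units.val_mul, ← zpow_natCast,
    ← zpow_neg, ← zpow_add, columnExponent]
  push_cast
  ring_nf

theorem groupWeight_mul_columnPoint_inv_ne (hb : 0 < b) (hbr : b ≤ r)
    (hβ : r * n * μ ≤ orderOf β) {k k' : ℕ} (hk : k < μ * n) (hk' : k' < μ * n) (hne : k ≠ k') :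
    (groupWeight (r * n) β (k / n) * (columnPoint n b β a k)⁻¹ : F) ≠
      groupWeight (r * n) β (k' / n) * (columnPoint n b β a k')⁻¹ := by
  rw [groupWeight_mul_columnPoint_inv, groupWeight_mul_columnPoint_inv, Ne, Units.val_inj,
    zpow_neg, zpow_neg, inv_inj, zpow_natCast, zpow_natCast]
  refine fun h => hne (columnExponent_injective (b := b) (hb.trans_le hbr)
    (Nat.pos_of_mul_pos_left (Nat.zero_lt_of_lt hk)) a ?_)
  exact pow_injOn_Iio_orderOf ((columnExponent_lt hb hbr a hk).trans_le hβ)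
    ((columnExponent_lt hb hbr a hk').trans_le hβ) h

theorem columnPoint_mem_image_iff [DecidableEq F] (hb : 0 < b) (hβ : b * n ≤ orderOf β)
    (hn : 0 < n) {T : Finset (Fin n)} (k : ℕ) :
    (columnPoint n b β a k : F) ∈ T.image (fun t : Fin n => (columnPoint n b β a t : F)) ↔
      (⟨k % n, Nat.mod_lt _ hn⟩ : Fin n) ∈ T := by
  simp only [mem_image, columnPoint_eq_columnPoint_iff hb hβ hn]
  refine ⟨fun ⟨t, ht, h⟩ => ?_, fun h => ⟨_, h, Nat.mod_mod _ _⟩⟩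
  have hkt : (⟨k % n, Nat.mod_lt _ hn⟩ : Fin n) = t :=
    Fin.ext (h.symm.trans (Nat.mod_eq_of_lt t.isLt))
  rwa [hkt]

theorem card_image_columnPoint [DecidableEq F] (hb : 0 < b) (hβ : b * n ≤ orderOf β)
    (hn : 0 < n) (T : Finset (Fin n)) :
    #(T.image fun t : Fin n => (columnPoint n b β a t : F)) = #T :=
  card_image_of_injective _ fun t t' h => by
    simpa [Nat.mod_eq_of_lt, Fin.ext_iff] using (columnPoint_eq_columnPoint_iff hb hβ hn).1 h

end Construction1

theorem statement3_general (μ n r d b : ℕ)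
    (hn : 0 < n)
    (hdl : n - r ≤ d) (hdh : d ≤ n - 1)
    (hb : b = d + 1 - (n - r))
    (F : Type*) [Field F]
    (β : Fˣ) (hβ : max (r * n * μ) (b * n) ≤ orderOf β)
    (a : ℕ) :
    sdCriterion μ n r 2 hn (construction1H μ n r (r * n) b β a) := by
  classical
  intro T hT Fs hFs hFsT e he hrange
  refine Matrix.isUnit_det_submatrix_of_forall_mulVec_eq_zero _ he fun c hc hce => ?_
  have hb0 : 0 < b := by omega
  have hβb : b * n ≤ orderOf β := (le_max_right _ _).trans hβ
  have hmem := columnPoint_mem_image_iff (F := F) (a := a) hb0 hβb hn (T := T)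
  obtain ⟨f₁, f₂, hf, rfl⟩ := card_eq_two.1 hFs
  obtain ⟨hmom, htop, hinv⟩ := construction1H_moments hc
  refine eq_zero_of_moments hmom htop hinv (fun k => Units.ne_zero _)
    (fun k k' hg hx =>
      Fin.ext (Nat.ext_div_mod hg ((columnPoint_eq_columnPoint_iff hb0 hβb hn).1 hx)))
    ((card_image_columnPoint hb0 hβb hn T).trans hT) hf
    (fun h => hFsT f₁ (by simp) ((hmem f₁).1 h)) (fun h => hFsT f₂ (by simp) ((hmem f₂).1 h))
    (groupWeight_mul_columnPoint_inv_ne hb0 (by omega) ((le_max_left _ _).trans hβ) f₁.isLt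
      f₂.isLt (by simpa [Fin.ext_iff] using hf)) fun k hk => ?_
  have hke := hce k hk
  rw [hrange] at hke
  rcases hke with h | h
  · exact .inl ((hmem k).2 h)
  · exact .inr (by simpa using h)

/-- Let `μ, n, r, d` be positive integers with `r ≤ n` and
`n−r ≤ d ≤ n−1`, set `b = d+1−(n−r)`, `N = rn`, and let `q = 2^w` satisfy
`q ≥ max{rnμ, bn}`. Let `β ∈ GF(q)` have multiplicative order at least `max{rnμ, bn}`
and set `β_{i,j} = β^((i−1)+(j−1)n)`.  Then for every `a ∈ {0, …, b^n − 1}` the matrix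
`H^(a)` of Construction 1 satisfies the `(r, s = 2)` sector-disk criterion. -/
theorem statement3 (w μ n r d b : ℕ)
    (hw : 0 < w) (hμ : 0 < μ) (hn : 0 < n) (hr : 0 < r) (hd : 0 < d)
    (hrn : r ≤ n) (hdl : n - r ≤ d) (hdh : d ≤ n - 1)
    (hb : b = d + 1 - (n - r))
    (F : Type*) [Field F] [Fintype F] (hF : Fintype.card F = 2 ^ w)
    (hq : max (r * n * μ) (b * n) ≤ 2 ^ w)
    (β : Fˣ) (hβ : max (r * n * μ) (b * n) ≤ orderOf β)
    (a : ℕ) (ha : a < b ^ n) :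
    sdCriterion μ n r 2 hn (construction1H μ n r (r * n) b β a) :=
  statement3_general μ n r d b hn hdl hdh hb F β hβ a
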